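/- For every n ≥ 1 and λ ∈ k, the representation R_n(λ) of the quiver Q⁰ satisfies the relation m_{b₁}∘m_{a₁} + m_{b₂}∘m_{a₂} + m_{b₃}∘m_{a₃} = 0, every endomorphism of R_n(λ) is of the form (f,f,f,f,f) for a single n×n matrix f commuting with J_n(λ), R_n(λ) is indecomposable with local endomorphism ring, and R_n(λ) ≅ R_m(μ) if and only if n = m and λ = μ. (This is the continuous series of representations appearing in the analysis of the degenerated tubular algebra of type (2,2,2,2;0).) -/

import Mathlib

variable (k : Type) [Field k]

/-- A finite-dimensional representation of the quiver `Q⁰` with vertices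
`x,1,2,3,y` and arrows `aᵢ : x → i`, `bᵢ : i → y` for `i = 1,2,3`. -/
structure Q0Rep where
  Vx : Type
  V1 : Type
  V2 : Type
  V3 : Type
  Vy : Type
  [acgx : AddCommGroup Vx]
  [acg1 : AddCommGroup V1]
  [acg2 : AddCommGroup V2]
  [acg3 : AddCommGroup V3]
  [acgy : AddCommGroup Vy]
  [modx : Module k Vx]
  [mod1 : Module k V1]
  [mod2 : Module k V2]
  [mod3 : Module k V3]
  [mody : Module k Vy]
  [finx : FiniteDimensional k Vx]
  [fin1 : FiniteDimensional k V1]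
  [fin2 : FiniteDimensional k V2]
  [fin3 : FiniteDimensional k V3]
  [finy : FiniteDimensional k Vy]
  ma1 : Vx →ₗ[k] V1
  ma2 : Vx →ₗ[k] V2
  ma3 : Vx →ₗ[k] V3
  mb1 : V1 →ₗ[k] Vy
  mb2 : V2 →ₗ[k] Vy
  mb3 : V3 →ₗ[k] Vy

attribute [instance] Q0Rep.acgx Q0Rep.acg1 Q0Rep.acg2 Q0Rep.acg3 Q0Rep.acgy
  Q0Rep.modx Q0Rep.mod1 Q0Rep.mod2 Q0Rep.mod3 Q0Rep.mody
  Q0Rep.finx Q0Rep.fin1 Q0Rep.fin2 Q0Rep.fin3 Q0Rep.finy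

variable {k}

/-- Morphisms of representations of `Q⁰`. -/
@[ext]
structure Q0Hom (M N : Q0Rep k) where
  fx : M.Vx →ₗ[k] N.Vx
  f1 : M.V1 →ₗ[k] N.V1
  f2 : M.V2 →ₗ[k] N.V2
  f3 : M.V3 →ₗ[k] N.V3
  fy : M.Vy →ₗ[k] N.Vy
  comm_a1 : f1 ∘ₗ M.ma1 = N.ma1 ∘ₗ fx
  comm_a2 : f2 ∘ₗ M.ma2 = N.ma2 ∘ₗ fx
  comm_a3 : f3 ∘ₗ M.ma3 = N.ma3 ∘ₗ fx
  comm_b1 : fy ∘ₗ M.mb1 = N.mb1 ∘ₗ f1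
  comm_b2 : fy ∘ₗ M.mb2 = N.mb2 ∘ₗ f2
  comm_b3 : fy ∘ₗ M.mb3 = N.mb3 ∘ₗ f3

/-- Two representations are isomorphic iff there is a morphism all of whose
components are bijective. -/
def Q0Iso (M N : Q0Rep k) : Prop :=
  ∃ f : Q0Hom M N, Function.Bijective f.fx ∧ Function.Bijective f.f1 ∧
    Function.Bijective f.f2 ∧ Function.Bijective f.f3 ∧ Function.Bijective f.fy

/-- The zero representation(s). -/
def Q0Rep.IsZeroRep (M : Q0Rep k) : Prop :=
  Subsingleton M.Vx ∧ Subsingleton M.V1 ∧ Subsingleton M.V2 ∧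
    Subsingleton M.V3 ∧ Subsingleton M.Vy

/-- Vertexwise direct sum of representations. -/
def Q0Rep.dsum (M N : Q0Rep k) : Q0Rep k where
  Vx := M.Vx × N.Vx
  V1 := M.V1 × N.V1
  V2 := M.V2 × N.V2
  V3 := M.V3 × N.V3
  Vy := M.Vy × N.Vy
  ma1 := M.ma1.prodMap N.ma1
  ma2 := M.ma2.prodMap N.ma2
  ma3 := M.ma3.prodMap N.ma3
  mb1 := M.mb1.prodMap N.mb1
  mb2 := M.mb2.prodMap N.mb2
  mb3 := M.mb3.prodMap N.mb3

/-- A representation is indecomposable if it is nonzero and not isomorphic to a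
direct sum of two nonzero representations. -/
def Q0Rep.Indecomposable (M : Q0Rep k) : Prop :=
  ¬ M.IsZeroRep ∧ ∀ A B : Q0Rep k, Q0Iso M (A.dsum B) → A.IsZeroRep ∨ B.IsZeroRep

lemma Q0Hom.comm_a1_apply {M N : Q0Rep k} (f : Q0Hom M N) (x : M.Vx) :
    f.f1 (M.ma1 x) = N.ma1 (f.fx x) := LinearMap.congr_fun f.comm_a1 x

lemma Q0Hom.comm_a2_apply {M N : Q0Rep k} (f : Q0Hom M N) (x : M.Vx) :
    f.f2 (M.ma2 x) = N.ma2 (f.fx x) := LinearMap.congr_fun f.comm_a2 x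

lemma Q0Hom.comm_a3_apply {M N : Q0Rep k} (f : Q0Hom M N) (x : M.Vx) :
    f.f3 (M.ma3 x) = N.ma3 (f.fx x) := LinearMap.congr_fun f.comm_a3 x

lemma Q0Hom.comm_b1_apply {M N : Q0Rep k} (f : Q0Hom M N) (x : M.V1) :
    f.fy (M.mb1 x) = N.mb1 (f.f1 x) := LinearMap.congr_fun f.comm_b1 x

lemma Q0Hom.comm_b2_apply {M N : Q0Rep k} (f : Q0Hom M N) (x : M.V2) :
    f.fy (M.mb2 x) = N.mb2 (f.f2 x) := LinearMap.congr_fun f.comm_b2 x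

lemma Q0Hom.comm_b3_apply {M N : Q0Rep k} (f : Q0Hom M N) (x : M.V3) :
    f.fy (M.mb3 x) = N.mb3 (f.f3 x) := LinearMap.congr_fun f.comm_b3 x

/-- Identity morphism. -/

def Q0Hom.idHom (M : Q0Rep k) : Q0Hom M M :=
  ⟨LinearMap.id, LinearMap.id, LinearMap.id, LinearMap.id, LinearMap.id,
    by simp, by simp, by simp, by simp, by simp, by simp⟩

/-- Composition of morphisms. -/
def Q0Hom.comp {L M N : Q0Rep k} (g : Q0Hom M N) (f : Q0Hom L M) : Q0Hom L N where
  fx := g.fx ∘ₗ f.fx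
  f1 := g.f1 ∘ₗ f.f1
  f2 := g.f2 ∘ₗ f.f2
  f3 := g.f3 ∘ₗ f.f3
  fy := g.fy ∘ₗ f.fy
  comm_a1 := by
    ext x
    simp [Q0Hom.comm_a1_apply]
  comm_a2 := by
    ext x
    simp [Q0Hom.comm_a2_apply]
  comm_a3 := by
    ext x
    simp [Q0Hom.comm_a3_apply]
  comm_b1 := by
    ext x
    simp [Q0Hom.comm_b1_apply]
  comm_b2 := by
    ext x
    simp [Q0Hom.comm_b2_apply]
  comm_b3 := by
    ext x
    simp [Q0Hom.comm_b3_apply]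

/-- Zero morphism. -/
def Q0Hom.zeroHom (M N : Q0Rep k) : Q0Hom M N :=
  ⟨0, 0, 0, 0, 0, by simp, by simp, by simp, by simp, by simp, by simp⟩

/-- Sum of morphisms. -/
def Q0Hom.add {M N : Q0Rep k} (f g : Q0Hom M N) : Q0Hom M N :=
  ⟨f.fx + g.fx, f.f1 + g.f1, f.f2 + g.f2, f.f3 + g.f3, f.fy + g.fy,
    by simp [LinearMap.add_comp, LinearMap.comp_add, f.comm_a1, g.comm_a1],
    by simp [LinearMap.add_comp, LinearMap.comp_add, f.comm_a2, g.comm_a2],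
    by simp [LinearMap.add_comp, LinearMap.comp_add, f.comm_a3, g.comm_a3],
    by simp [LinearMap.add_comp, LinearMap.comp_add, f.comm_b1, g.comm_b1],
    by simp [LinearMap.add_comp, LinearMap.comp_add, f.comm_b2, g.comm_b2],
    by simp [LinearMap.add_comp, LinearMap.comp_add, f.comm_b3, g.comm_b3]⟩

/-- Scalar multiples of the identity. -/
def Q0Hom.smulId (M : Q0Rep k) (r : k) : Q0Hom M M :=
  ⟨r • LinearMap.id, r • LinearMap.id, r • LinearMap.id, r • LinearMap.id, r • LinearMap.id,
    by ext x; simp, by ext x; simp, by ext x; simp,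
    by ext x; simp, by ext x; simp, by ext x; simp⟩

/-- The endomorphism of the total space induced by an endomorphism of a
representation. -/
def Q0Hom.prodEnd {M : Q0Rep k} (g : Q0Hom M M) :
    Module.End k ((((M.Vx × M.V1) × M.V2) × M.V3) × M.Vy) :=
  (((g.fx.prodMap g.f1).prodMap g.f2).prodMap g.f3).prodMap g.fy

/-- The endomorphism algebra `End(M)`, realized as a subalgebra of the
endomorphisms of the total space. -/
def Q0End (M : Q0Rep k) :
    Subalgebra k (Module.End k ((((M.Vx × M.V1) × M.V2) × M.V3) × M.Vy)) where
  carrier := {F | ∃ g : Q0Hom M M, F = g.prodEnd}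
  zero_mem' := ⟨Q0Hom.zeroHom M M, LinearMap.ext fun _ => rfl⟩
  one_mem' := ⟨Q0Hom.idHom M, LinearMap.ext fun _ => rfl⟩
  add_mem' := by
    rintro a b ⟨g, rfl⟩ ⟨h, rfl⟩
    exact ⟨g.add h, LinearMap.ext fun _ => rfl⟩
  mul_mem' := by
    rintro a b ⟨g, rfl⟩ ⟨h, rfl⟩
    exact ⟨g.comp h, LinearMap.ext fun _ => rfl⟩
  algebraMap_mem' := fun r =>
    ⟨Q0Hom.smulId M r, LinearMap.ext fun x => by
      simp [Module.algebraMap_end_apply, Q0Hom.prodEnd, Q0Hom.smulId]⟩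

variable (k)

/-- The `n×n` Jordan block with eigenvalue `lam`, as a linear endomorphism of `kⁿ`. -/
def jordan (n : ℕ) (lam : k) : (Fin n → k) →ₗ[k] (Fin n → k) :=
  Matrix.mulVecLin (Matrix.of fun i j : Fin n =>
    if i = j then lam else if (i : ℕ) + 1 = (j : ℕ) then 1 else 0)

/-- The representation `R_n(λ)` of `Q⁰`: all spaces `kⁿ`, `m_{a₁}=m_{a₂}=m_{a₃}=id`,
`m_{b₁}=id`, `m_{b₂}=−id−J_n(λ)`, `m_{b₃}=J_n(λ)`. -/
def Rlam (n : ℕ) (lam : k) : Q0Rep k where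
  Vx := Fin n → k
  V1 := Fin n → k
  V2 := Fin n → k
  V3 := Fin n → k
  Vy := Fin n → k
  ma1 := LinearMap.id
  ma2 := LinearMap.id
  ma3 := LinearMap.id
  mb1 := LinearMap.id
  mb2 := -LinearMap.id - jordan k n lam
  mb3 := jordan k n lam

/-!
`R_n(λ)` is `kⁿ` at every vertex with all `aᵢ` and `b₁` the identity, so a morphism
`R_n(λ) → R_m(μ)` is a single linear map `f` with `f J_n(λ) = J_m(μ) f`. Writing
`J_n(λ) = λ + N` with `N` the nilpotent shift, whose kernel is the line spanned by `e₀`, any `f`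
commuting with `N` preserves that line, acting on it by a scalar `c`, and `f - c` is nilpotent.
Hence every endomorphism of `R_n(λ)` is a scalar plus a nilpotent, so `End(R_n(λ))` is local and
`R_n(λ)` is indecomposable. An isomorphism `R_n(λ) ≅ R_m(μ)` forces `n = m` by dimension and
conjugates `J_n(λ) - λ` to `J_n(μ) - λ = (μ - λ) + N`, which is nilpotent only if `λ = μ`.
-/

open LinearMap

variable {k}

theorem IsIdempotentElem.eq_zero_or_one_of_isLocalRing {A : Type*} [Ring A] [IsLocalRing A]
    {e : A} (he : IsIdempotentElem e) : e = 0 ∨ e = 1 := by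
  rcases IsLocalRing.isUnit_or_isUnit_of_add_one (add_sub_cancel e 1) with h | h
  · exact .inr ((IsIdempotentElem.iff_eq_one_of_isUnit h).mp he)
  · exact .inl (sub_eq_self.mp ((IsIdempotentElem.iff_eq_one_of_isUnit h).mp he.one_sub))

theorem IsLocalRing.of_forall_exists_isNilpotent_sub_algebraMap {K A : Type*} [Field K] [Ring A]
    [Algebra K A] [Nontrivial A] (h : ∀ a : A, ∃ c : K, IsNilpotent (a - algebraMap K A c)) :
    IsLocalRing A := by
  refine .of_isUnit_or_isUnit_one_sub_self fun a => ?_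
  obtain ⟨c, hc⟩ := h a
  by_cases hc0 : c = 0
  · right
    simpa [hc0] using hc.isUnit_one_sub
  · left
    simpa using hc.isUnit_add_left_of_commute ((isUnit_iff_ne_zero.mpr hc0).map (algebraMap K A))
      (Algebra.commute_algebraMap_right c _)

namespace Module.End

variable {R M : Type*} [Semiring R] [AddCommMonoid M] [Module R M]

theorem ker_pow_le_ker_pow_of_commute_of_ker_le {f N : End R M} (hc : Commute f N)
    (hker : ker N ≤ ker f) (j : ℕ) : ker (N ^ j) ≤ ker (f ^ j) := by
  induction j with
  | zero => simp
  | succ j ih =>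
    intro v hv
    have hNv : (N ^ j) v ∈ ker N := by simpa [pow_succ'] using hv
    have hfv : (N ^ j) (f v) = 0 := by
      rw [← mul_apply, ← (hc.pow_right j).eq, mul_apply]
      exact hker hNv
    simpa [pow_succ] using ih hfv

theorem isNilpotent_of_commute_of_ker_le {f N : End R M} (hc : Commute f N)
    (hker : ker N ≤ ker f) (hN : IsNilpotent N) : IsNilpotent f := by
  obtain ⟨n, hn⟩ := hN
  refine ⟨n, ker_eq_top.mp (top_le_iff.mp ?_)⟩
  simpa [hn] using ker_pow_le_ker_pow_of_commute_of_ker_le hc hker n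

end Module.End

theorem LinearMap.isNilpotent_of_comp_eq_comp_of_surjective {R M N : Type*} [Semiring R]
    [AddCommMonoid M] [AddCommMonoid N] [Module R M] [Module R N] {f : M →ₗ[R] N}
    (hf : Function.Surjective f)
    {A : Module.End R M} {B : Module.End R N} (h : B ∘ₗ f = f ∘ₗ A) (hA : IsNilpotent A) :
    IsNilpotent B := by
  obtain ⟨n, hn⟩ := hA
  refine ⟨n, (cancel_right hf).mp ?_⟩
  rw [Module.End.commute_pow_left_of_commute h, hn]
  simp

theorem LinearEquiv.symm_comp_eq_comp_symm {R A B C D : Type*} [Semiring R] [AddCommMonoid A]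
    [AddCommMonoid B] [AddCommMonoid C] [AddCommMonoid D] [Module R A] [Module R B] [Module R C]
    [Module R D] (eA : A ≃ₗ[R] C) (eB : B ≃ₗ[R] D) {p : A →ₗ[R] B} {q : C →ₗ[R] D}
    (h : eB.toLinearMap ∘ₗ p = q ∘ₗ eA.toLinearMap) :
    eB.symm.toLinearMap ∘ₗ q = p ∘ₗ eA.symm.toLinearMap := by
  rw [toLinearMap_symm_comp_eq, ← comp_assoc, h]
  ext
  simp

section ProdProjection

variable {R W VA VB : Type*} [Semiring R] [AddCommMonoid W] [AddCommMonoid VA] [AddCommMonoid VB]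
  [Module R W] [Module R VA] [Module R VB] {F : W →ₗ[R] VA × VB}

theorem LinearMap.subsingleton_fst_of_prodMap_comp_eq_zero (hF : Function.Surjective F)
    (h : prodMap id (0 : VB →ₗ[R] VB) ∘ₗ F = 0) : Subsingleton VA := by
  refine subsingleton_of_forall_eq 0 fun a => ?_
  obtain ⟨w, hw⟩ := hF (a, 0)
  simpa [hw] using congr(($h w).1)

theorem LinearMap.subsingleton_snd_of_prodMap_comp_eq_self (hF : Function.Surjective F)
    (h : prodMap id 0 ∘ₗ F = F) : Subsingleton VB := by
  refine subsingleton_of_forall_eq 0 fun b => ?_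
  obtain ⟨w, hw⟩ := hF (0, b)
  simpa [hw] using congr(($h w).2).symm

end ProdProjection

section Shift

variable (R : Type*) [CommRing R]

def shift (n : ℕ) : Module.End R (Fin n → R) where
  toFun v i := if h : (i : ℕ) + 1 < n then v ⟨i + 1, h⟩ else 0
  map_add' u v := by ext i; by_cases h : (i : ℕ) + 1 < n <;> simp [h]
  map_smul' c v := by ext i; by_cases h : (i : ℕ) + 1 < n <;> simp [h]

variable {R}

theorem shift_apply {n : ℕ} (v : Fin n → R) (i : Fin n) :
    shift R n v i = if h : (i : ℕ) + 1 < n then v ⟨i + 1, h⟩ else 0 := rfl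

theorem shift_pow_apply {n : ℕ} (j : ℕ) (v : Fin n → R) (i : Fin n) :
    (shift R n ^ j) v i = if h : (i : ℕ) + j < n then v ⟨i + j, h⟩ else 0 := by
  induction j generalizing v with
  | zero => simp
  | succ j ih =>
    rw [pow_succ, Module.End.mul_apply, ih]
    by_cases h : (i : ℕ) + (j + 1) < n
    · simp [shift_apply, h, show (i : ℕ) + j < n by omega, add_assoc]
    · simp only [h, dite_false]
      split_ifs with h' <;> simp [shift_apply]; omega

theorem isNilpotent_shift (n : ℕ) : IsNilpotent (shift R n) :=
  ⟨n, LinearMap.ext fun v => funext fun i => by simp [shift_pow_apply]⟩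

theorem shift_single_zero {n : ℕ} (hn : 0 < n) : shift R n (Pi.single ⟨0, hn⟩ 1) = 0 := by
  ext i
  simp [shift_apply, Fin.ext_iff]

theorem eq_smul_single_zero_of_shift_eq_zero {n : ℕ} (hn : 0 < n) {v : Fin n → R}
    (hv : shift R n v = 0) : v = v ⟨0, hn⟩ • Pi.single ⟨0, hn⟩ 1 := by
  ext i
  obtain ⟨_ | j, hi⟩ := i
  · simp
  · have := congrFun hv ⟨j, by omega⟩
    rw [shift_apply, dif_pos hi, Pi.zero_apply] at this
    simp [this, Fin.ext_iff]

/-- `f` preserves `ker (shift R n) = R ∙ e₀` and acts on it by a scalar `c`; then `f - c` kills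
this kernel. -/
theorem exists_isNilpotent_sub_algebraMap_of_commute_shift {n : ℕ} (hn : 0 < n)
    {f : Module.End R (Fin n → R)} (hf : Commute f (shift R n)) :
    ∃ c : R, IsNilpotent (f - algebraMap R _ c) := by
  have hfe : shift R n (f (Pi.single ⟨0, hn⟩ 1)) = 0 := by
    rw [← Module.End.mul_apply, ← hf.eq, Module.End.mul_apply, shift_single_zero, map_zero]
  refine ⟨f (Pi.single ⟨0, hn⟩ 1) ⟨0, hn⟩, Module.End.isNilpotent_of_commute_of_ker_le
    (hf.sub_left (Algebra.commute_algebraMap_left _ _)) (fun v hv => ?_) (isNilpotent_shift n)⟩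
  rw [mem_ker] at hv ⊢
  rw [eq_smul_single_zero_of_shift_eq_zero hn hv, map_smul, LinearMap.sub_apply,
    Module.algebraMap_end_apply, ← eq_smul_single_zero_of_shift_eq_zero hn hfe, sub_self,
    smul_zero]

end Shift

section Jordan

theorem jordan_eq_algebraMap_add_shift (n : ℕ) (lam : k) :
    jordan k n lam = algebraMap k _ lam + shift k n := by
  refine LinearMap.ext fun v => funext fun i => ?_
  simp only [jordan, Matrix.mulVecLin_apply, Matrix.mulVec, dotProduct, Matrix.of_apply, ite_mul,
    one_mul, zero_mul, LinearMap.add_apply, Module.algebraMap_end_apply, Pi.add_apply,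
    Pi.smul_apply, smul_eq_mul, shift_apply]
  rw [Fintype.sum_eq_add_sum_compl i, if_pos rfl]
  congr 1
  split_ifs with h
  · rw [Finset.sum_eq_single_of_mem ⟨i + 1, h⟩ (by simp [Fin.ext_iff])]
    · simp [Fin.ext_iff]
    · intro j hj hji
      simp_all [Fin.ext_iff]
      split_ifs <;> first | rfl | omega
  · refine Finset.sum_eq_zero fun j hj => ?_
    simp_all [Fin.ext_iff]
    split_ifs <;> first | rfl | omega

theorem commute_jordan_iff {n : ℕ} {lam : k} {f : Module.End k (Fin n → k)} :
    Commute f (jordan k n lam) ↔ Commute f (shift k n) := by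
  rw [jordan_eq_algebraMap_add_shift]
  exact ⟨fun h => by simpa using h.sub_right (Algebra.commute_algebraMap_right lam f),
    (Algebra.commute_algebraMap_right lam f).add_right⟩

theorem isNilpotent_jordan_sub_algebraMap_iff {n : ℕ} (hn : 0 < n) {lam mu : k} :
    IsNilpotent (jordan k n mu - algebraMap k _ lam) ↔ mu = lam := by
  have hJ : jordan k n mu - algebraMap k _ lam = algebraMap k _ (mu - lam) + shift k n := by
    rw [jordan_eq_algebraMap_add_shift, map_sub]
    abel
  rw [hJ]
  refine ⟨fun h => by_contra fun hne => ?_, fun h => by simpa [h] using isNilpotent_shift n⟩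
  have := NeZero.of_pos hn
  exact ((isNilpotent_shift n).isUnit_add_left_of_commute
    ((isUnit_iff_ne_zero.mpr (sub_ne_zero.mpr hne)).map _)
    (Algebra.commute_algebraMap_right _ _)).not_isNilpotent h

end Jordan

namespace Q0Hom

variable {M N : Q0Rep k}

theorem prodEnd_injective : Function.Injective (prodEnd : Q0Hom M M → _) := by
  intro g h hgh
  ext v
  · simpa [prodEnd] using congr(($hgh ((((v, 0), 0), 0), 0)).1.1.1.1)
  · simpa [prodEnd] using congr(($hgh ((((0, v), 0), 0), 0)).1.1.1.2)
  · simpa [prodEnd] using congr(($hgh ((((0, 0), v), 0), 0)).1.1.2)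
  · simpa [prodEnd] using congr(($hgh ((((0, 0), 0), v), 0)).1.2)
  · simpa [prodEnd] using congr(($hgh ((((0, 0), 0), 0), v)).2)

variable (f : Q0Hom M N) (hx : Function.Bijective f.fx)
  (h1 : Function.Bijective f.f1) (h2 : Function.Bijective f.f2) (h3 : Function.Bijective f.f3)
  (hy : Function.Bijective f.fy)

noncomputable def inv : Q0Hom N M where
  fx := (LinearEquiv.ofBijective f.fx hx).symm
  f1 := (LinearEquiv.ofBijective f.f1 h1).symm
  f2 := (LinearEquiv.ofBijective f.f2 h2).symm
  f3 := (LinearEquiv.ofBijective f.f3 h3).symm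
  fy := (LinearEquiv.ofBijective f.fy hy).symm
  comm_a1 := LinearEquiv.symm_comp_eq_comp_symm _ _ f.comm_a1
  comm_a2 := LinearEquiv.symm_comp_eq_comp_symm _ _ f.comm_a2
  comm_a3 := LinearEquiv.symm_comp_eq_comp_symm _ _ f.comm_a3
  comm_b1 := LinearEquiv.symm_comp_eq_comp_symm _ _ f.comm_b1
  comm_b2 := LinearEquiv.symm_comp_eq_comp_symm _ _ f.comm_b2
  comm_b3 := LinearEquiv.symm_comp_eq_comp_symm _ _ f.comm_b3

theorem comp_inv : f.comp (f.inv hx h1 h2 h3 hy) = idHom N := by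
  ext v <;> exact (LinearEquiv.ofBijective _ _).apply_symm_apply v

variable (M N) in
def projLeft : Q0Hom (M.dsum N) (M.dsum N) where
  fx := prodMap id 0
  f1 := prodMap id 0
  f2 := prodMap id 0
  f3 := prodMap id 0
  fy := prodMap id 0
  comm_a1 := LinearMap.ext fun _ => Prod.ext rfl (map_zero N.ma1).symm
  comm_a2 := LinearMap.ext fun _ => Prod.ext rfl (map_zero N.ma2).symm
  comm_a3 := LinearMap.ext fun _ => Prod.ext rfl (map_zero N.ma3).symm
  comm_b1 := LinearMap.ext fun _ => Prod.ext rfl (map_zero N.mb1).symm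
  comm_b2 := LinearMap.ext fun _ => Prod.ext rfl (map_zero N.mb2).symm
  comm_b3 := LinearMap.ext fun _ => Prod.ext rfl (map_zero N.mb3).symm

theorem projLeft_comp_projLeft : (projLeft M N).comp (projLeft M N) = projLeft M N := by
  ext <;> rfl

end Q0Hom

theorem Q0Rep.not_isZeroRep_of_nontrivial (M : Q0Rep k) [Nontrivial (Q0End M)] :
    ¬ M.IsZeroRep := by
  rintro ⟨_, _, _, _, _⟩
  exact not_subsingleton (Q0End M) inferInstance

section Decomposition

variable {M A B : Q0Rep k} {f : Q0Hom M (A.dsum B)}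

theorem Q0Rep.isZeroRep_left_of_projLeft_comp_eq_zero (hx : Function.Surjective f.fx)
    (h1 : Function.Surjective f.f1) (h2 : Function.Surjective f.f2)
    (h3 : Function.Surjective f.f3) (hy : Function.Surjective f.fy)
    (h : (Q0Hom.projLeft A B).comp f = Q0Hom.zeroHom M (A.dsum B)) : A.IsZeroRep :=
  ⟨subsingleton_fst_of_prodMap_comp_eq_zero hx (congrArg Q0Hom.fx h),
    subsingleton_fst_of_prodMap_comp_eq_zero h1 (congrArg Q0Hom.f1 h),
    subsingleton_fst_of_prodMap_comp_eq_zero h2 (congrArg Q0Hom.f2 h),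
    subsingleton_fst_of_prodMap_comp_eq_zero h3 (congrArg Q0Hom.f3 h),
    subsingleton_fst_of_prodMap_comp_eq_zero hy (congrArg Q0Hom.fy h)⟩

theorem Q0Rep.isZeroRep_right_of_projLeft_comp_eq_self (hx : Function.Surjective f.fx)
    (h1 : Function.Surjective f.f1) (h2 : Function.Surjective f.f2)
    (h3 : Function.Surjective f.f3) (hy : Function.Surjective f.fy)
    (h : (Q0Hom.projLeft A B).comp f = f) : B.IsZeroRep :=
  ⟨subsingleton_snd_of_prodMap_comp_eq_self hx (congrArg Q0Hom.fx h),
    subsingleton_snd_of_prodMap_comp_eq_self h1 (congrArg Q0Hom.f1 h),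
    subsingleton_snd_of_prodMap_comp_eq_self h2 (congrArg Q0Hom.f2 h),
    subsingleton_snd_of_prodMap_comp_eq_self h3 (congrArg Q0Hom.f3 h),
    subsingleton_snd_of_prodMap_comp_eq_self hy (congrArg Q0Hom.fy h)⟩

end Decomposition

/-- An isomorphism `f : M ≅ A ⊕ B` turns the projection onto `A` into an idempotent
endomorphism `e` of `M`, which is `0` or `1` in a local ring. -/
theorem Q0Rep.indecomposable_of_isLocalRing (M : Q0Rep k) [IsLocalRing (Q0End M)] :
    M.Indecomposable := by
  refine ⟨M.not_isZeroRep_of_nontrivial, fun A B ⟨f, hx, h1, h2, h3, hy⟩ => ?_⟩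
  set finv := f.inv hx h1 h2 h3 hy
  set e := finv.comp ((Q0Hom.projLeft A B).comp f)
  have hfe : f.comp e = (Q0Hom.projLeft A B).comp f := by
    change (f.comp finv).comp _ = _
    rw [Q0Hom.comp_inv]
    rfl
  have hee : e.comp e = e := by
    change finv.comp ((Q0Hom.projLeft A B).comp (f.comp e)) = e
    rw [hfe]
    change finv.comp (((Q0Hom.projLeft A B).comp (Q0Hom.projLeft A B)).comp f) = e
    rw [Q0Hom.projLeft_comp_projLeft]
  have hidem : IsIdempotentElem (⟨e.prodEnd, e, rfl⟩ : Q0End M) :=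
    Subtype.ext (congrArg Q0Hom.prodEnd hee)
  rcases IsIdempotentElem.eq_zero_or_one_of_isLocalRing (A := Q0End M) hidem with h0 | h1'
  · left
    have he : e = Q0Hom.zeroHom M M := Q0Hom.prodEnd_injective (congrArg Subtype.val h0)
    refine Q0Rep.isZeroRep_left_of_projLeft_comp_eq_zero hx.surjective h1.surjective
      h2.surjective h3.surjective hy.surjective ?_
    rw [← hfe, he]
    ext <;> simp [Q0Hom.comp, Q0Hom.zeroHom]
  · right
    have he : e = Q0Hom.idHom M := Q0Hom.prodEnd_injective (congrArg Subtype.val h1')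
    refine Q0Rep.isZeroRep_right_of_projLeft_comp_eq_self hx.surjective h1.surjective
      h2.surjective h3.surjective hy.surjective ?_
    rw [← hfe, he]
    rfl

def diagEnd (R V : Type*) [CommSemiring R] [AddCommMonoid V] [Module R V] :
    Module.End R V →ₐ[R] Module.End R ((((V × V) × V) × V) × V) where
  toFun f := (((f.prodMap f).prodMap f).prodMap f).prodMap f
  map_one' := rfl
  map_mul' _ _ := rfl
  map_zero' := rfl
  map_add' _ _ := rfl
  commutes' _ := rfl

namespace Rlam

variable {n m : ℕ} {lam mu : k}

theorem sum_mb_comp_ma_eq_zero :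
    (Rlam k n lam).mb1 ∘ₗ (Rlam k n lam).ma1 + (Rlam k n lam).mb2 ∘ₗ (Rlam k n lam).ma2 +
      (Rlam k n lam).mb3 ∘ₗ (Rlam k n lam).ma3 = 0 := by
  refine LinearMap.ext fun (v : Fin n → k) => ?_
  change v + (-v - jordan k n lam v) + jordan k n lam v = 0
  abel

theorem exists_hom_eq (g : Q0Hom (Rlam k n lam) (Rlam k m mu)) :
    ∃ f : (Fin n → k) →ₗ[k] (Fin m → k),
      g.fx = f ∧ g.f1 = f ∧ g.f2 = f ∧ g.f3 = f ∧ g.fy = f ∧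
      f ∘ₗ jordan k n lam = jordan k m mu ∘ₗ f := by
  -- `maᵢ` and `mb1` are identities, so these squares read `fᵢ = fx` and `fy = f1`
  have h1 : g.f1 = g.fx := g.comm_a1
  have h3 : g.f3 = g.fx := g.comm_a3
  have hy : g.fy = g.fx := g.comm_b1.trans h1
  have hJ := g.comm_b3
  rw [hy, h3] at hJ
  exact ⟨g.fx, rfl, h1, g.comm_a2, h3, hy, hJ⟩

theorem isLocalRing_q0End (hn : 0 < n) : IsLocalRing (Q0End (Rlam k n lam)) := by
  have := NeZero.of_pos hn
  have : Nontrivial (Rlam k n lam).Vx := inferInstanceAs (Nontrivial (Fin n → k))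
  refine IsLocalRing.of_forall_exists_isNilpotent_sub_algebraMap
    (A := Q0End (Rlam k n lam)) (K := k) fun a => ?_
  obtain ⟨g, hg⟩ := a.2
  obtain ⟨f, hx, h1, h2, h3, hy, hf⟩ := exists_hom_eq g
  have ha : diagEnd k _ f = a.val := by
    rw [hg]
    simp only [Q0Hom.prodEnd, hx, h1, h2, h3, hy]
    rfl
  obtain ⟨c, hc⟩ :=
    exists_isNilpotent_sub_algebraMap_of_commute_shift hn (commute_jordan_iff.mp hf)
  refine ⟨c, (IsNilpotent.map_iff (f := (Q0End _).val) Subtype.val_injective).mp ?_⟩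
  have hnil := hc.map (diagEnd k _)
  rwa [map_sub, AlgHom.commutes, ha] at hnil

theorem iso_iff (hn : 0 < n) : Q0Iso (Rlam k n lam) (Rlam k m mu) ↔ n = m ∧ lam = mu := by
  constructor
  · rintro ⟨g, hgx, -, -, -, -⟩
    obtain ⟨f, hgf, -, -, -, -, hf⟩ := exists_hom_eq g
    have hbij : Function.Bijective f := hgf ▸ hgx
    obtain rfl : n = m := by simpa using (LinearEquiv.ofBijective f hbij).finrank_eq
    refine ⟨rfl, ((isNilpotent_jordan_sub_algebraMap_iff hn).mp ?_).symm⟩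
    refine LinearMap.isNilpotent_of_comp_eq_comp_of_surjective hbij.surjective ?_
      ((isNilpotent_jordan_sub_algebraMap_iff (lam := lam) hn).mpr rfl)
    rw [sub_comp, comp_sub, hf]
    congr 1
    ext v
    simp [Module.algebraMap_end_apply]
  · rintro ⟨rfl, rfl⟩
    exact ⟨Q0Hom.idHom _, Function.bijective_id, Function.bijective_id, Function.bijective_id,
      Function.bijective_id, Function.bijective_id⟩

end Rlam

/-- `R_n(λ)` satisfies the relation
`m_{b₁}∘m_{a₁} + m_{b₂}∘m_{a₂} + m_{b₃}∘m_{a₃} = 0`; every endomorphism of `R_n(λ)`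
is of the form `(f,f,f,f,f)` with `f` commuting with `J_n(λ)`; `R_n(λ)` is
indecomposable with local endomorphism ring; and `R_n(λ) ≅ R_m(μ)` iff `n = m` and
`λ = μ`. -/
theorem stmt15 (k : Type) [Field k] (n : ℕ) (hn : 1 ≤ n) (lam : k) :
    ((Rlam k n lam).mb1 ∘ₗ (Rlam k n lam).ma1 + (Rlam k n lam).mb2 ∘ₗ (Rlam k n lam).ma2 +
      (Rlam k n lam).mb3 ∘ₗ (Rlam k n lam).ma3 = 0) ∧
    (∀ g : Q0Hom (Rlam k n lam) (Rlam k n lam),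
      ∃ f : (Fin n → k) →ₗ[k] (Fin n → k),
        g.fx = f ∧ g.f1 = f ∧ g.f2 = f ∧ g.f3 = f ∧ g.fy = f ∧
        f ∘ₗ jordan k n lam = jordan k n lam ∘ₗ f) ∧
    (Rlam k n lam).Indecomposable ∧ IsLocalRing (Q0End (Rlam k n lam)) ∧
    (∀ (m : ℕ), 1 ≤ m → ∀ mu : k,
      (Q0Iso (Rlam k n lam) (Rlam k m mu) ↔ n = m ∧ lam = mu)) := by
  have hlocal : IsLocalRing (Q0End (Rlam k n lam)) := Rlam.isLocalRing_q0End hn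
  exact ⟨Rlam.sum_mb_comp_ma_eq_zero, Rlam.exists_hom_eq,
    Q0Rep.indecomposable_of_isLocalRing _, hlocal, fun _ _ _ => Rlam.iso_iff hn⟩
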